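/- Let f(z) = (z(1+λ²) - iλz² - iλ)/(λz² - i(1+λ²)z + λ) for 0 < λ < 1 and set z₁ = -λ, z₂ = λ, w₁ = f(z₁) = -1, w₂ = f(z₂) = 1. Then equality holds in the inequality Re{ Σ_{k=1}² S_f(z_k)(w₂-w₁)²/(6 f'(z_k)²) + 2(w₂-w₁)²/(f'(z₁)f'(z₂)(z₁-z₂)²) + 2|w₂-w₁|²/(f'(z₁) conj(f'(z₂)) (1 - z₁ z̄₂)²) } ≤ 2 + |w₂-w₁|²/(|f'(z₁)|²(1-|z₁|²)²) + |w₂-w₁|²/(|f'(z₂)|²(1-|z₂|²)²). -/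

import Mathlib

/-!
Writing `f = N/D` with `D(z) = λz² - i(1+λ²)z + λ`, the Wronskian identity
`N'D - ND' = 2λ(1+λ²)(1-z²)` gives `f' = 2λ(1+λ²)(1-z²)/D²`, hence
`f''/f' = -2z/(1-z²) - 2D'/D`. At `z = ±λ` the denominator is `D = (1+λ²)(λ ∓ iλ)`, so
`f'(±λ) = ±ir` with `r = (1-λ²)/(λ(1+λ²))` and `S_f(±λ) = -6/(1-λ²)²`. The two Schwarzian
terms then coincide with the two terms on the right, and what remains is
`1/λ² - 4/(1+λ²)² = r²`.
-/

open Complex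

/-- The Schwarzian derivative `S_f = (f''/f')' - (1/2)(f''/f')²`. -/
noncomputable def schwarzian (f : ℂ → ℂ) (z : ℂ) : ℂ :=
  deriv (fun w => deriv (deriv f) w / deriv f w) z -
    (1 / 2) * (deriv (deriv f) z / deriv f z) ^ 2

open Polynomial Filter Topology

theorem schwarzian_eq_of_eventuallyEq {f p : ℂ → ℂ} {z p' : ℂ}
    (hp : (fun w => deriv (deriv f) w / deriv f w) =ᶠ[𝓝 z] p) (hp' : HasDerivAt p p' z) :
    schwarzian f z = p' - 1 / 2 * p z ^ 2 := by
  rw [schwarzian, hp.deriv_eq, hp'.deriv, ← hp.eq_of_nhds]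

theorem schwarzian_eq_of_deriv_eq_mul_div_sq {f : ℂ → ℂ} {z c : ℂ} {u D : ℂ[X]}
    (hf : ∀ᶠ w in 𝓝 z, deriv f w = c * u.eval w / D.eval w ^ 2) (hc : c ≠ 0)
    (hu : u.eval z ≠ 0) (hD : D.eval z ≠ 0) :
    schwarzian f z = u.derivative.derivative.eval z / u.eval z
      - 3 / 2 * (u.derivative.eval z / u.eval z) ^ 2
      - 2 * D.derivative.derivative.eval z / D.eval z
      + 2 * u.derivative.eval z * D.derivative.eval z / (u.eval z * D.eval z) := by
  have hlog : ∀ᶠ w in 𝓝 z, deriv (deriv f) w / deriv f w =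
      u.derivative.eval w / u.eval w - 2 * D.derivative.eval w / D.eval w := by
    filter_upwards [hf.eventually_nhds, u.continuous.continuousAt.eventually_ne hu,
      D.continuous.continuousAt.eventually_ne hD] with w hfw huw hDw
    have hg : HasDerivAt (fun x => c * u.eval x / D.eval x ^ 2) _ w :=
      ((u.hasDerivAt w).const_mul c).div ((D.hasDerivAt w).fun_pow 2) (pow_ne_zero 2 hDw)
    rw [EventuallyEq.deriv_eq hfw, hg.deriv, hfw.self_of_nhds]
    field_simp
    ring
  have hp' := ((u.derivative.hasDerivAt z).div (u.hasDerivAt z) hu).sub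
    (((D.derivative.hasDerivAt z).const_mul 2).div (D.hasDerivAt z) hD)
  rw [schwarzian_eq_of_eventuallyEq hlog hp']
  field_simp
  ring

noncomputable def extremalNum (l : ℂ) : ℂ[X] := C (1 + l ^ 2) * X - C (I * l) * X ^ 2 - C (I * l)

noncomputable def extremalDen (l : ℂ) : ℂ[X] := C l * X ^ 2 - C (I * (1 + l ^ 2)) * X + C l

noncomputable def extremalMap (l z : ℂ) : ℂ := (extremalNum l).eval z / (extremalDen l).eval z

section ExtremalMap

variable {l z : ℂ}

theorem derivative_extremalDen (l : ℂ) :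
    (extremalDen l).derivative = C (2 * l) * X - C (I * (1 + l ^ 2)) := by
  rw [extremalDen, derivative_add, derivative_sub, derivative_C_mul_X_pow, derivative_C_mul_X,
    derivative_C, add_zero, Nat.cast_ofNat, mul_comm l, pow_one]

theorem derivative_derivative_extremalDen (l : ℂ) :
    (extremalDen l).derivative.derivative = C (2 * l) := by
  rw [derivative_extremalDen, derivative_sub, derivative_C_mul_X, derivative_C, sub_zero]

theorem extremal_wronskian (l z : ℂ) :
    (extremalNum l).derivative.eval z * (extremalDen l).eval z
      - (extremalNum l).eval z * (extremalDen l).derivative.eval z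
      = 2 * l * (1 + l ^ 2) * (1 - z ^ 2) := by
  simp only [extremalNum, extremalDen, derivative_add, derivative_sub, derivative_C_mul_X_pow,
    derivative_C_mul_X, derivative_C, eval_zero, eval_add, eval_sub, eval_mul, eval_C, eval_X,
    eval_pow]
  push_cast
  linear_combination (l * (1 + l ^ 2) * (z ^ 2 - 1)) * I_sq

theorem deriv_extremalMap (hz : (extremalDen l).eval z ≠ 0) :
    deriv (extremalMap l) z =
      2 * l * (1 + l ^ 2) * (1 - X ^ 2 : ℂ[X]).eval z / (extremalDen l).eval z ^ 2 := by
  rw [eval_sub, eval_one, eval_pow, eval_X, ← extremal_wronskian]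
  exact (((extremalNum l).hasDerivAt z).div ((extremalDen l).hasDerivAt z) hz).deriv

theorem eval_extremalDen_of_sq_eq (hz : z ^ 2 = l ^ 2) :
    (extremalDen l).eval z = (1 + l ^ 2) * (l - I * z) := by
  simp only [extremalDen, eval_add, eval_sub, eval_mul, eval_C, eval_pow, eval_X]
  linear_combination l * hz

theorem sub_I_mul_ne_zero_of_sq_eq (hz : z ^ 2 = l ^ 2) (hl : l ≠ 0) : l - I * z ≠ 0 := by
  intro h
  have : l ^ 2 = -l ^ 2 := by linear_combination (l + I * z) * h - hz + z ^ 2 * I_sq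
  exact hl (by linear_combination (exp := 2) this / 2)

theorem eval_extremalDen_ne_zero_of_sq_eq (hz : z ^ 2 = l ^ 2) (hl : l ≠ 0)
    (hl2 : 1 + l ^ 2 ≠ 0) : (extremalDen l).eval z ≠ 0 := by
  rw [eval_extremalDen_of_sq_eq hz]
  exact mul_ne_zero hl2 (sub_I_mul_ne_zero_of_sq_eq hz hl)

theorem schwarzian_extremalMap_of_sq_eq (hz : z ^ 2 = l ^ 2) (hl : l ≠ 0)
    (hl1 : 1 - l ^ 2 ≠ 0) (hl2 : 1 + l ^ 2 ≠ 0) :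
    schwarzian (extremalMap l) z = -6 / (1 - l ^ 2) ^ 2 := by
  have hD := eval_extremalDen_ne_zero_of_sq_eq hz hl hl2
  have hu : (1 - X ^ 2 : ℂ[X]).eval z = 1 - l ^ 2 := by simp [hz]
  have hu1 : (1 - X ^ 2 : ℂ[X]).derivative.eval z = -2 * z := by norm_num
  have hu2 : (1 - X ^ 2 : ℂ[X]).derivative.derivative.eval z = -2 := by norm_num
  have hf : ∀ᶠ w in 𝓝 z, deriv (extremalMap l) w =
      2 * l * (1 + l ^ 2) * (1 - X ^ 2 : ℂ[X]).eval w / (extremalDen l).eval w ^ 2 :=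
    ((extremalDen l).continuous.continuousAt.eventually_ne hD).mono fun w hw =>
      deriv_extremalMap hw
  rw [schwarzian_eq_of_deriv_eq_mul_div_sq hf (by simp [hl, hl2]) (hu ▸ hl1) hD, hu, hu1, hu2,
    eval_extremalDen_of_sq_eq hz, derivative_derivative_extremalDen, derivative_extremalDen]
  simp only [eval_C, eval_sub, eval_mul, eval_X]
  have hlz : l - z * I ≠ 0 := mul_comm I z ▸ sub_I_mul_ne_zero_of_sq_eq hz hl
  field_simp
  linear_combination (2 * l ^ 3 - 14 * l + 6 * I * z * (1 + l ^ 2)) * hz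

theorem deriv_extremalMap_of_sq_eq (hz : z ^ 2 = l ^ 2) (hl : l ≠ 0) (hl2 : 1 + l ^ 2 ≠ 0) :
    deriv (extremalMap l) z = 2 * l * (1 - l ^ 2) / ((1 + l ^ 2) * (l - I * z) ^ 2) := by
  have hlz := sub_I_mul_ne_zero_of_sq_eq hz hl
  rw [deriv_extremalMap (eval_extremalDen_ne_zero_of_sq_eq hz hl hl2),
    eval_extremalDen_of_sq_eq hz]
  simp only [eval_sub, eval_one, eval_pow, eval_X, hz]
  field_simp

theorem deriv_extremalMap_self (hl : l ≠ 0) (hl2 : 1 + l ^ 2 ≠ 0) :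
    deriv (extremalMap l) l = I * ((1 - l ^ 2) / (l * (1 + l ^ 2))) := by
  rw [deriv_extremalMap_of_sq_eq rfl hl hl2,
    show (l - I * l) ^ 2 = -2 * I * l ^ 2 by linear_combination l ^ 2 * I_sq]
  field_simp
  linear_combination (-(1 - l ^ 2)) * I_sq

theorem deriv_extremalMap_neg_self (hl : l ≠ 0) (hl2 : 1 + l ^ 2 ≠ 0) :
    deriv (extremalMap l) (-l) = -(I * ((1 - l ^ 2) / (l * (1 + l ^ 2)))) := by
  rw [deriv_extremalMap_of_sq_eq (neg_sq l) hl hl2,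
    show (l - I * -l) ^ 2 = 2 * I * l ^ 2 by linear_combination l ^ 2 * I_sq]
  field_simp
  linear_combination (1 - l ^ 2) * I_sq

end ExtremalMap

theorem extremal_equality_schwarzian_general (lam : ℝ) (h0 : 0 < lam) (h1 : lam < 1)
    (f : ℂ → ℂ)
    (hf : ∀ z : ℂ, f z = (z * (1 + (lam : ℂ) ^ 2) - I * lam * z ^ 2 - I * lam) /
      ((lam : ℂ) * z ^ 2 - I * (1 + (lam : ℂ) ^ 2) * z + lam))
    (z₁ z₂ w₁ w₂ : ℂ)
    (hz₁ : z₁ = -(lam : ℂ)) (hz₂ : z₂ = (lam : ℂ))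
    (hw₁' : w₁ = -1) (hw₂' : w₂ = 1) :
    (schwarzian f z₁ * (w₂ - w₁) ^ 2 / (6 * (deriv f z₁) ^ 2) +
      schwarzian f z₂ * (w₂ - w₁) ^ 2 / (6 * (deriv f z₂) ^ 2) +
      2 * (w₂ - w₁) ^ 2 / (deriv f z₁ * deriv f z₂ * (z₁ - z₂) ^ 2) +
      2 * (‖w₂ - w₁‖ ^ 2 : ℂ) /
        (deriv f z₁ * (starRingEnd ℂ) (deriv f z₂) * (1 - z₁ * (starRingEnd ℂ) z₂) ^ 2)).re =
    2 + ‖w₂ - w₁‖ ^ 2 /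
          (‖deriv f z₁‖ ^ 2 * (1 - ‖z₁‖ ^ 2) ^ 2) +
        ‖w₂ - w₁‖ ^ 2 /
          (‖deriv f z₂‖ ^ 2 * (1 - ‖z₂‖ ^ 2) ^ 2) := by
  obtain rfl : f = extremalMap lam := funext fun z => by
    simp only [hf, extremalMap, extremalNum, extremalDen, eval_add, eval_sub, eval_mul, eval_C,
      eval_X, eval_pow, mul_comm z]
  subst hz₁ hz₂ hw₁' hw₂'
  have hlam1 : 1 - lam ^ 2 ≠ 0 := by nlinarith
  have hl : (lam : ℂ) ≠ 0 := by exact_mod_cast h0.ne'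
  have hl1 : 1 - (lam : ℂ) ^ 2 ≠ 0 := by exact_mod_cast hlam1
  have hl2 : 1 + (lam : ℂ) ^ 2 ≠ 0 := by exact_mod_cast (by positivity : 1 + lam ^ 2 ≠ 0)
  rw [schwarzian_extremalMap_of_sq_eq rfl hl hl1 hl2,
    schwarzian_extremalMap_of_sq_eq (neg_sq _) hl hl1 hl2,
    deriv_extremalMap_self hl hl2, deriv_extremalMap_neg_self hl hl2,
    show (1 - (lam : ℂ) ^ 2) / (lam * (1 + lam ^ 2)) =
      ((1 - lam ^ 2) / (lam * (1 + lam ^ 2)) : ℝ) by push_cast; rfl]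
  -- `f'(±λ) = ±ir` with `r` real, so every summand is the cast of a real number
  simp only [norm_neg, norm_mul, norm_I, norm_real, Real.norm_eq_abs, one_mul, map_mul, conj_I,
    conj_ofReal, sq_abs]
  norm_num
  rw [← sq, mul_pow I, I_sq]
  norm_cast
  field_simp
  push_cast
  ring

theorem extremal_equality_schwarzian (lam : ℝ) (h0 : 0 < lam) (h1 : lam < 1)
    (f : ℂ → ℂ)
    (hf : ∀ z : ℂ, f z = (z * (1 + (lam : ℂ) ^ 2) - I * lam * z ^ 2 - I * lam) /
      ((lam : ℂ) * z ^ 2 - I * (1 + (lam : ℂ) ^ 2) * z + lam))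
    (z₁ z₂ w₁ w₂ : ℂ)
    (hz₁ : z₁ = -(lam : ℂ)) (hz₂ : z₂ = (lam : ℂ))
    (hw₁ : w₁ = f z₁) (hw₂ : w₂ = f z₂)
    (hw₁' : w₁ = -1) (hw₂' : w₂ = 1) :
    (schwarzian f z₁ * (w₂ - w₁) ^ 2 / (6 * (deriv f z₁) ^ 2) +
      schwarzian f z₂ * (w₂ - w₁) ^ 2 / (6 * (deriv f z₂) ^ 2) +
      2 * (w₂ - w₁) ^ 2 / (deriv f z₁ * deriv f z₂ * (z₁ - z₂) ^ 2) +
      2 * (‖w₂ - w₁‖ ^ 2 : ℂ) /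
        (deriv f z₁ * (starRingEnd ℂ) (deriv f z₂) * (1 - z₁ * (starRingEnd ℂ) z₂) ^ 2)).re =
    2 + ‖w₂ - w₁‖ ^ 2 /
          (‖deriv f z₁‖ ^ 2 * (1 - ‖z₁‖ ^ 2) ^ 2) +
        ‖w₂ - w₁‖ ^ 2 /
          (‖deriv f z₂‖ ^ 2 * (1 - ‖z₂‖ ^ 2) ^ 2) :=
  extremal_equality_schwarzian_general lam h0 h1 f hf z₁ z₂ w₁ w₂ hz₁ hz₂ hw₁' hw₂'
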